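/- Let k ≥ 1 be an integer, let m : (0,∞) → ℂ be of class C^k and satisfy the Mihlin–Hörmander condition of order k, and let a > 0. Then the function s ↦ m(s + a) on (0,∞) also satisfies the Mihlin–Hörmander condition of order k. -/

import Mathlib

open MeasureTheory

/-- The Mihlin–Hörmander condition of (integer) order `k` for a function on `(0,∞)`:
for every `j ≤ k`, `sup_{r>0} r^(2j−1) ∫_r^{2r} |m^{(j)}(s)|² ds < ∞`, where the
derivatives are taken within `(0,∞)`. -/
def MihlinHormanderCond (k : ℕ) (m : ℝ → ℂ) : Prop :=
  ∀ j : ℕ, j ≤ k → ∃ A : ℝ, ∀ r : ℝ, 0 < r →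
    r ^ (2 * (j : ℤ) - 1) *
        ∫ s in Set.Ioc r (2 * r), ‖iteratedDerivWithin j m (Set.Ioi 0) s‖ ^ 2 ≤ A

/-- On the open set `(0,∞)`, the iterated derivative within of a translate is a translate
of the iterated derivative within. -/
lemma iteratedDerivWithin_shift (j : ℕ) (m : ℝ → ℂ) (a : ℝ) (ha : 0 < a)
    {s : ℝ} (hs : s ∈ Set.Ioi (0:ℝ)) :
    iteratedDerivWithin j (fun t => m (t + a)) (Set.Ioi 0) s
      = iteratedDerivWithin j m (Set.Ioi 0) (s + a) := by
  have hsa : s + a ∈ Set.Ioi (0:ℝ) := by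
    simp only [Set.mem_Ioi] at hs ⊢; linarith
  have h1 : iteratedDerivWithin j (fun t => m (t + a)) (Set.Ioi 0) s
      = iteratedDeriv j (fun t => m (t + a)) s := by
    rw [iteratedDerivWithin_eq_iteratedFDerivWithin, iteratedDeriv_eq_iteratedFDeriv,
      iteratedFDerivWithin_of_isOpen j isOpen_Ioi hs]
  have h2 : iteratedDerivWithin j m (Set.Ioi 0) (s + a) = iteratedDeriv j m (s + a) := by
    rw [iteratedDerivWithin_eq_iteratedFDerivWithin, iteratedDeriv_eq_iteratedFDeriv,
      iteratedFDerivWithin_of_isOpen j isOpen_Ioi hsa]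
  rw [h1, h2, iteratedDeriv_comp_add_const j m a]

/-- Lemma 6.10, integer-order form: if `m` is `C^k` on `(0,∞)` and
satisfies the Mihlin–Hörmander condition of order `k ≥ 1`, then for every `a > 0` the
translate `s ↦ m(s+a)` also satisfies the Mihlin–Hörmander condition of order `k`. -/
theorem stmt_14 (k : ℕ) (hk : 1 ≤ k) (m : ℝ → ℂ)
    (hsmooth : ContDiffOn ℝ k m (Set.Ioi 0))
    (hm : MihlinHormanderCond k m) (a : ℝ) (ha : 0 < a) :
    MihlinHormanderCond k (fun s => m (s + a)) := by
  intro j hj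
  obtain ⟨A, hA⟩ := hm j hj
  set g : ℝ → ℝ := fun s => ‖iteratedDerivWithin j m (Set.Ioi 0) s‖ ^ 2 with hg
  have hgnn : ∀ s, 0 ≤ g s := fun s => by positivity
  -- continuity of g on (0,∞)
  have hgc : ContinuousOn g (Set.Ioi 0) := by
    have := hsmooth.continuousOn_iteratedDerivWithin
      (by exact_mod_cast hj : (j : WithTop ℕ∞) ≤ (k : ℕ∞)) (uniqueDiffOn_Ioi 0)
    exact (this.norm).pow 2
  -- integrability of g on compact subintervals of (0,∞)
  have hgint : ∀ b c : ℝ, 0 < b → IntegrableOn g (Set.Ioc b c) := by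
    intro b c hb
    have hsub : Set.Icc b c ⊆ Set.Ioi 0 := fun x hx => lt_of_lt_of_le hb hx.1
    exact ((hgc.mono hsub).integrableOn_Icc).mono_set Set.Ioc_subset_Icc_self
  -- nonnegativity of A
  have hA0 : 0 ≤ A := by
    have h1 := hA 1 one_pos
    simp only [one_zpow, one_mul] at h1
    exact le_trans (integral_nonneg fun s => hgnn s) h1
  -- bound for g on [a, 3a]
  obtain ⟨M, hM⟩ := (isCompact_Icc (a := a) (b := 3 * a)).exists_bound_of_continuousOn
    (hgc.mono (fun x hx => lt_of_lt_of_le ha hx.1))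
  have hM0 : 0 ≤ M := le_trans (norm_nonneg _) (hM a ⟨le_refl a, by linarith⟩)
  have hgM : ∀ x ∈ Set.Icc a (3 * a), g x ≤ M := fun x hx =>
    le_trans (le_abs_self _) (hM x hx)
  -- the translated integral identity
  have key : ∀ r : ℝ, 0 < r →
      (∫ s in Set.Ioc r (2 * r),
        ‖iteratedDerivWithin j (fun t => m (t + a)) (Set.Ioi 0) s‖ ^ 2)
      = ∫ s in Set.Ioc (r + a) (2 * r + a), g s := by
    intro r hr
    have h1 : (∫ s in Set.Ioc r (2 * r),
        ‖iteratedDerivWithin j (fun t => m (t + a)) (Set.Ioi 0) s‖ ^ 2)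
        = ∫ s in Set.Ioc r (2 * r), g (s + a) := by
      refine setIntegral_congr_fun measurableSet_Ioc (fun s hs => ?_)
      have hs0 : s ∈ Set.Ioi (0:ℝ) := lt_trans hr hs.1
      rw [hg]
      simp only
      rw [iteratedDerivWithin_shift j m a ha hs0]
    rw [h1, ← intervalIntegral.integral_of_le (by linarith : r ≤ 2 * r),
      intervalIntegral.integral_comp_add_right g a,
      intervalIntegral.integral_of_le (by linarith : r + a ≤ 2 * r + a)]
  refine ⟨max (a ^ (2 * j) * M) (A + 2 * A), fun r hr => ?_⟩
  rw [key r hr]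
  have hrne : r ≠ 0 := ne_of_gt hr
  rcases le_total r a with hra | har
  · -- small r : use the sup bound on [a, 3a]
    refine le_trans ?_ (le_max_left _ _)
    have hsub : Set.Ioc (r + a) (2 * r + a) ⊆ Set.Icc a (3 * a) := by
      intro x hx
      constructor
      · linarith [hx.1]
      · linarith [hx.2]
    have hint : ∫ s in Set.Ioc (r + a) (2 * r + a), g s
        ≤ ∫ _s in Set.Ioc (r + a) (2 * r + a), M := by
      refine setIntegral_mono_on (hgint _ _ (by linarith)) ?_ measurableSet_Ioc
        (fun x hx => hgM x (hsub hx))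
      exact integrableOn_const (by rw [Real.volume_Ioc]; exact ENNReal.ofReal_ne_top)
    have hconst : (∫ _s in Set.Ioc (r + a) (2 * r + a), M) = r * M := by
      rw [setIntegral_const, measureReal_def, Real.volume_Ioc, smul_eq_mul,
        ENNReal.toReal_ofReal (by linarith : (0:ℝ) ≤ 2 * r + a - (r + a))]
      ring_nf
    have hI : ∫ s in Set.Ioc (r + a) (2 * r + a), g s ≤ r * M := hconst ▸ hint
    have hzp : (0:ℝ) < r ^ (2 * (j:ℤ) - 1) := zpow_pos hr _
    calc r ^ (2 * (j:ℤ) - 1) * ∫ s in Set.Ioc (r + a) (2 * r + a), g s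
        ≤ r ^ (2 * (j:ℤ) - 1) * (r * M) := by
          exact mul_le_mul_of_nonneg_left hI (le_of_lt hzp)
      _ = r ^ (2 * j) * M := by
          rw [← mul_assoc]
          congr 1
          rw [zpow_sub₀ hrne, zpow_one, div_mul_cancel₀ _ hrne, ← zpow_natCast r (2 * j)]
          norm_cast
      _ ≤ a ^ (2 * j) * M := by
          exact mul_le_mul_of_nonneg_right (pow_le_pow_left₀ (le_of_lt hr) hra _) hM0
  · -- large r : Ioc (r+a) (2r+a) ⊆ Ioc r (4r), use hypothesis at r and 2r
    refine le_trans ?_ (le_max_right _ _)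
    have hsub : Set.Ioc (r + a) (2 * r + a) ⊆ Set.Ioc r (2 * (2 * r)) := by
      intro x hx
      exact ⟨by linarith [hx.1], by linarith [hx.2]⟩
    have hint4 : IntegrableOn g (Set.Ioc r (2 * (2 * r))) := hgint _ _ hr
    have hmono : ∫ s in Set.Ioc (r + a) (2 * r + a), g s
        ≤ ∫ s in Set.Ioc r (2 * (2 * r)), g s := by
      refine setIntegral_mono_set hint4 (Filter.Eventually.of_forall hgnn)
        (Filter.Eventually.of_forall ?_)
      exact hsub
    have hsplit : (∫ s in Set.Ioc r (2 * (2 * r)), g s)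
        = (∫ s in Set.Ioc r (2 * r), g s)
          + ∫ s in Set.Ioc (2 * r) (2 * (2 * r)), g s := by
      rw [← Set.Ioc_union_Ioc_eq_Ioc (by linarith : r ≤ 2 * r) (by linarith : 2 * r ≤ 2 * (2 * r))]
      exact setIntegral_union (Set.Ioc_disjoint_Ioc_of_le le_rfl) measurableSet_Ioc
        (hgint _ _ hr) (hgint _ _ (by linarith))
    have hzp : (0:ℝ) < r ^ (2 * (j:ℤ) - 1) := zpow_pos hr _
    have h1 : r ^ (2 * (j:ℤ) - 1) * ∫ s in Set.Ioc r (2 * r), g s ≤ A := hA r hr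
    have h2 : r ^ (2 * (j:ℤ) - 1) * ∫ s in Set.Ioc (2 * r) (2 * (2 * r)), g s ≤ 2 * A := by
      have hA2 := hA (2 * r) (by linarith)
      have hfac : r ^ (2 * (j:ℤ) - 1)
          = (2:ℝ) ^ (1 - 2 * (j:ℤ)) * (2 * r) ^ (2 * (j:ℤ) - 1) := by
        rw [mul_zpow, ← mul_assoc, ← zpow_add₀ (by norm_num : (2:ℝ) ≠ 0)]
        norm_num
      have h2pos : (0:ℝ) < (2:ℝ) ^ (1 - 2 * (j:ℤ)) := zpow_pos (by norm_num) _
      have h2le : ((2:ℝ)) ^ (1 - 2 * (j:ℤ)) ≤ 2 := by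
        calc ((2:ℝ)) ^ (1 - 2 * (j:ℤ)) ≤ (2:ℝ) ^ (1:ℤ) :=
              zpow_le_zpow_right₀ (by norm_num) (by omega)
          _ = 2 := zpow_one 2
      calc r ^ (2 * (j:ℤ) - 1) * ∫ s in Set.Ioc (2 * r) (2 * (2 * r)), g s
          = (2:ℝ) ^ (1 - 2 * (j:ℤ))
            * ((2 * r) ^ (2 * (j:ℤ) - 1) * ∫ s in Set.Ioc (2 * r) (2 * (2 * r)), g s) := by
            rw [hfac]; ring
        _ ≤ (2:ℝ) ^ (1 - 2 * (j:ℤ)) * A := mul_le_mul_of_nonneg_left hA2 (le_of_lt h2pos)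
        _ ≤ 2 * A := mul_le_mul_of_nonneg_right h2le hA0
    calc r ^ (2 * (j:ℤ) - 1) * ∫ s in Set.Ioc (r + a) (2 * r + a), g s
        ≤ r ^ (2 * (j:ℤ) - 1) * ((∫ s in Set.Ioc r (2 * r), g s)
          + ∫ s in Set.Ioc (2 * r) (2 * (2 * r)), g s) := by
          rw [← hsplit]
          exact mul_le_mul_of_nonneg_left hmono (le_of_lt hzp)
      _ = r ^ (2 * (j:ℤ) - 1) * (∫ s in Set.Ioc r (2 * r), g s)
          + r ^ (2 * (j:ℤ) - 1) * ∫ s in Set.Ioc (2 * r) (2 * (2 * r)), g s := by ring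
      _ ≤ A + 2 * A := add_le_add h1 h2
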